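/- arXiv:2006.08479 — 2 statements merged into one kernel-verified Lean document; each statement's English description precedes it below -/
import Mathlib

section
/- Under the hypotheses of the initial-algebra theorem (K an O-category with strict morphisms and initial object, F locally continuous, κ : Φ ⇒ A an O-colimit of ⊥ → F⊥ → F²⊥ → ⋯), (A, unfold) with unfold = ⊔_n F(κ_n) ∘ κ_{n+1}^p is a terminal F-coalgebra: for every F-coalgebra (B, b : B → F B), the morphism ρ = ⊔_n κ_n ∘ β_n, where β₀ = (⊥_B)^p and β_{n+1} = F β_n ∘ b, is the unique morphism B → A with unfold ∘ ρ = F ρ ∘ b. -/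
open CategoryTheory OmegaCompletePartialOrder

universe v u

class OHom (K : Type u) [Category.{v} K] where
  homOrder : ∀ X Y : K, OmegaCompletePartialOrder (X ⟶ Y)

attribute [instance] OHom.homOrder

/-- An O-category: a category enriched in dcpos with continuous composition. -/
class OCat (K : Type u) [Category.{v} K] extends OHom K where
  comp_mono : ∀ {X Y Z : K} {f f' : X ⟶ Y} {g g' : Y ⟶ Z},
    f ≤ f' → g ≤ g' → f ≫ g ≤ f' ≫ g'
  comp_cont_left : ∀ {X Y Z : K} (g : Y ⟶ Z) (c : Chain (X ⟶ Y))
    (hm : Monotone fun n => c n ≫ g),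
    ωSup c ≫ g = ωSup ⟨fun n => c n ≫ g, hm⟩
  comp_cont_right : ∀ {X Y Z : K} (f : X ⟶ Y) (c : Chain (Y ⟶ Z))
    (hm : Monotone fun n => f ≫ c n),
    f ≫ ωSup c = ωSup ⟨fun n => f ≫ c n, hm⟩

/-- Iterated application of an endofunctor to an object: `pob F X n = Fⁿ X`. -/
def pob {K : Type u} [Category.{v} K] (F : K ⥤ K) (X : K) : ℕ → K
  | 0 => X
  | n + 1 => F.obj (pob F X n)

/-- The links `Fⁿ k : Fⁿ X ⟶ Fⁿ⁺¹ X` of the ω-chain generated by a first link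
`k : X ⟶ F X`. -/
def plink {K : Type u} [Category.{v} K] (F : K ⥤ K) {X : K} (k : X ⟶ F.obj X) :
    ∀ n, pob F X n ⟶ pob F X (n + 1)
  | 0 => k
  | n + 1 => F.map (plink F k n)

/-! The projections out of the limit satisfy `unfold ≫ F (κpₙ) = κpₙ₊₁`. This rests on
`F (κₘ ≫ κpₙ) = κₘ₊₁ ≫ κpₙ₊₁`: for `m ≤ n` by induction along the links
`κₙ ≫ κpₙ₊₁ = Fⁿ ι`, and for `m ≥ n` because `F` preserves embedding–projection pairs and an
embedding determines its projection. Hence a coalgebra morphism `ψ` satisfies `ψ ≫ κpₙ = βₙ` for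
all `n` (for `n = 0` since every morphism into `⊥` is zero), so `ψ = ψ ≫ ⊔ₙ κpₙ ≫ κₙ = ρ`.
Conversely `ρ ≫ unfold` is the diagonal supremum `⊔ₖ (βₖ ≫ κₖ) ≫ κpₖ₊₁ ≫ F κₖ`, whose
`(k+1)`-st term is `b ≫ F (βₖ ≫ κₖ)`, and the supremum of the latter is `b ≫ F ρ`. -/

theorem ωSup_eq_of_eq_succ {α : Type*} [OmegaCompletePartialOrder α] (c d : Chain α)
    (h : ∀ n, d n = c (n + 1)) : ωSup d = ωSup c :=
  le_antisymm (ωSup_le _ _ fun n => (h n).trans_le (le_ωSup c (n + 1)))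
    (ωSup_le _ _ fun n => (c.monotone n.le_succ).trans ((h n).symm.trans_le (le_ωSup d n)))

namespace OCat

variable {K : Type u} [Category.{v} K] [OCat K]

theorem ωSup_comp {X Y Z : K} (c : Chain (X ⟶ Y)) (g : Y ⟶ Z) :
    ωSup c ≫ g = ωSup ⟨fun n => c n ≫ g, fun _ _ h => comp_mono (c.monotone h) le_rfl⟩ :=
  comp_cont_left g c _

theorem comp_ωSup {X Y Z : K} (f : X ⟶ Y) (c : Chain (Y ⟶ Z)) :
    f ≫ ωSup c = ωSup ⟨fun n => f ≫ c n, fun _ _ h => comp_mono le_rfl (c.monotone h)⟩ :=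
  comp_cont_right f c _

theorem ωSup_comp_ωSup {X Y Z : K} (c : Chain (X ⟶ Y)) (d : Chain (Y ⟶ Z)) :
    ωSup c ≫ ωSup d =
      ωSup ⟨fun n => c n ≫ d n, fun _ _ h => comp_mono (c.monotone h) (d.monotone h)⟩ := by
  rw [comp_ωSup]
  refine le_antisymm (ωSup_le _ _ fun m => ?_) (ωSup_le _ _ fun k => ?_)
  · show ωSup c ≫ d m ≤ _
    rw [ωSup_comp]
    refine ωSup_le _ _ fun n => le_ωSup_of_le (max n m) ?_
    exact comp_mono (c.monotone (le_max_left n m)) (d.monotone (le_max_right n m))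
  · exact le_ωSup_of_le k (comp_mono (le_ωSup c k) le_rfl)

end OCat

open OCat

section EmbeddingProjection

variable {K : Type u} [Category.{v} K] [OCat K]

structure IsEmbProj {X Y : K} (e : X ⟶ Y) (p : Y ⟶ X) : Prop where
  emb_comp_proj : e ≫ p = 𝟙 X
  proj_comp_emb_le : p ≫ e ≤ 𝟙 Y

theorem IsEmbProj.map {X Y : K} {e : X ⟶ Y} {p : Y ⟶ X} (h : IsEmbProj e p) (F : K ⥤ K)
    (hFmono : ∀ {X Y : K} {f g : X ⟶ Y}, f ≤ g → F.map f ≤ F.map g) :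
    IsEmbProj (F.map e) (F.map p) where
  emb_comp_proj := by rw [← F.map_comp, h.emb_comp_proj, F.map_id]
  proj_comp_emb_le := by
    rw [← F.map_comp, ← F.map_id]
    exact hFmono h.proj_comp_emb_le

theorem proj_le_of_emb_comp_eq_id {X Y : K} {e : X ⟶ Y} {p p' : Y ⟶ X} (h : p ≫ e ≤ 𝟙 Y)
    (h' : e ≫ p' = 𝟙 X) : p ≤ p' :=
  calc p = (p ≫ e) ≫ p' := by rw [Category.assoc, h', Category.comp_id]
    _ ≤ 𝟙 Y ≫ p' := comp_mono h le_rfl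
    _ = p' := Category.id_comp p'

theorem IsEmbProj.proj_unique {X Y : K} {e : X ⟶ Y} {p p' : Y ⟶ X} (h : IsEmbProj e p)
    (h' : IsEmbProj e p') : p = p' :=
  le_antisymm (proj_le_of_emb_comp_eq_id h.proj_comp_emb_le h'.emb_comp_proj)
    (proj_le_of_emb_comp_eq_id h'.proj_comp_emb_le h.emb_comp_proj)

variable {D : ℕ → K} {A : K} {κ : ∀ n, D n ⟶ A} {κp : ∀ n, A ⟶ D n}

theorem emb_comp_proj_comp_emb_of_le (hκ : ∀ n, IsEmbProj (κ n) (κp n))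
    (hmono : Monotone fun n => κp n ≫ κ n) {m n : ℕ} (h : m ≤ n) : κ m ≫ κp n ≫ κ n = κ m := by
  refine le_antisymm ?_ ?_
  · calc κ m ≫ κp n ≫ κ n ≤ κ m ≫ 𝟙 A := comp_mono le_rfl (hκ n).proj_comp_emb_le
      _ = κ m := Category.comp_id _
  · calc κ m = κ m ≫ κp m ≫ κ m := by rw [← Category.assoc, (hκ m).emb_comp_proj, Category.id_comp]
      _ ≤ κ m ≫ κp n ≫ κ n := comp_mono le_rfl (hmono h)

theorem emb_comp_proj_trans (hκ : ∀ n, IsEmbProj (κ n) (κp n))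
    (hmono : Monotone fun n => κp n ≫ κ n) {m n : ℕ} (h : m ≤ n) (l : ℕ) :
    (κ m ≫ κp n) ≫ κ n ≫ κp l = κ m ≫ κp l := by
  simpa only [Category.assoc] using
    congrArg (· ≫ κp l) (emb_comp_proj_comp_emb_of_le hκ hmono h)

theorem isEmbProj_of_le (hκ : ∀ n, IsEmbProj (κ n) (κp n))
    (hmono : Monotone fun n => κp n ≫ κ n) {m n : ℕ} (h : m ≤ n) :
    IsEmbProj (κ m ≫ κp n) (κ n ≫ κp m) where
  emb_comp_proj := by rw [emb_comp_proj_trans hκ hmono h, (hκ m).emb_comp_proj]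
  proj_comp_emb_le :=
    calc (κ n ≫ κp m) ≫ κ m ≫ κp n = κ n ≫ (κp m ≫ κ m) ≫ κp n := by
          simp only [Category.assoc]
      _ ≤ κ n ≫ 𝟙 A ≫ κp n := comp_mono le_rfl (comp_mono (hκ m).proj_comp_emb_le le_rfl)
      _ = 𝟙 (D n) := by rw [Category.id_comp, (hκ n).emb_comp_proj]

theorem eq_ωSup_of_comp_proj_eq {hmono : Monotone fun n => κp n ≫ κ n}
    (hsup : ωSup ⟨fun n => κp n ≫ κ n, hmono⟩ = 𝟙 A) {B : K} {β : ∀ n, B ⟶ D n}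
    (hρ : Monotone fun n => β n ≫ κ n) (ψ : B ⟶ A) (hψ : ∀ n, ψ ≫ κp n = β n) :
    ψ = ωSup ⟨fun n => β n ≫ κ n, hρ⟩ :=
  calc ψ = ψ ≫ ωSup ⟨fun n => κp n ≫ κ n, hmono⟩ := by rw [hsup, Category.comp_id]
    _ = ωSup ⟨fun n => β n ≫ κ n, hρ⟩ := by
        rw [comp_ωSup]
        refine congrArg ωSup (Chain.ext (funext fun n => ?_))
        show ψ ≫ κp n ≫ κ n = β n ≫ κ n
        rw [← hψ n, Category.assoc]

end EmbeddingProjection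

section IteratedChain

variable {K : Type u} [Category.{v} K] {F : K ⥤ K} {X : K} {k : X ⟶ F.obj X} {A : K}
  {κ : ∀ n, pob F X n ⟶ A} {κp : ∀ n, A ⟶ pob F X n}

theorem emb_comp_proj_succ (hcocone : ∀ n, plink F k n ≫ κ (n + 1) = κ n)
    (hκ₁ : ∀ n, κ n ≫ κp n = 𝟙 (pob F X n)) (n : ℕ) : κ n ≫ κp (n + 1) = plink F k n := by
  rw [← hcocone n, Category.assoc, hκ₁, Category.comp_id]

theorem comp_emb_comp_proj_succ_comp_map_emb (hcocone : ∀ n, plink F k n ≫ κ (n + 1) = κ n)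
    (hκ₁ : ∀ n, κ n ≫ κp n = 𝟙 (pob F X n)) {B : K} (b : B ⟶ F.obj B)
    {β : ∀ n, B ⟶ pob F X n} (hβs : ∀ n, β (n + 1) = b ≫ F.map (β n)) (n : ℕ) :
    (β (n + 1) ≫ κ (n + 1)) ≫ κp (n + 2) ≫ F.map (κ (n + 1)) = b ≫ F.map (β n ≫ κ n) :=
  calc (β (n + 1) ≫ κ (n + 1)) ≫ κp (n + 2) ≫ F.map (κ (n + 1))
      = β (n + 1) ≫ (κ (n + 1) ≫ κp (n + 2)) ≫ F.map (κ (n + 1)) := by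
        rw [Category.assoc]; exact congrArg _ (Category.assoc _ _ _).symm
    _ = β (n + 1) ≫ F.map (plink F k n ≫ κ (n + 1)) := by
        rw [emb_comp_proj_succ hcocone hκ₁, F.map_comp]; rfl
    _ = b ≫ F.map (β n ≫ κ n) := by
        rw [hcocone, hβs, F.map_comp]; exact Category.assoc _ _ _

theorem comp_proj_eq_of_comp_unfold_eq {u : A ⟶ F.obj A}
    (hu : ∀ n, u ≫ F.map (κp n) = κp (n + 1)) {B : K} (b : B ⟶ F.obj B)
    {β : ∀ n, B ⟶ pob F X n} (hβs : ∀ n, β (n + 1) = b ≫ F.map (β n)) {ψ : B ⟶ A}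
    (hψ : ψ ≫ u = b ≫ F.map ψ) (h₀ : ψ ≫ κp 0 = β 0) (n : ℕ) : ψ ≫ κp n = β n := by
  induction n with
  | zero => exact h₀
  | succ n ih =>
    refine (congrArg (ψ ≫ ·) (hu n)).symm.trans ?_
    rw [← Category.assoc, hψ, Category.assoc, ← F.map_comp, ih, hβs]

variable [OCat K]

theorem map_emb_comp_proj_of_le (hκ : ∀ n, IsEmbProj (κ n) (κp n))
    (hmono : Monotone fun n => κp n ≫ κ n) (hcocone : ∀ n, plink F k n ≫ κ (n + 1) = κ n)
    {m n : ℕ} (h : m ≤ n) : F.map (κ m ≫ κp n) = κ (m + 1) ≫ κp (n + 1) := by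
  have hlink := emb_comp_proj_succ hcocone fun n => (hκ n).emb_comp_proj
  induction n, h using Nat.le_induction with
  | base => rw [(hκ m).emb_comp_proj, F.map_id, (hκ (m + 1)).emb_comp_proj]; rfl
  | succ n hmn ih =>
    rw [← emb_comp_proj_trans hκ hmono hmn (n + 1), hlink, F.map_comp, ih,
      ← emb_comp_proj_trans hκ hmono (Nat.succ_le_succ hmn) (n + 2), hlink]
    rfl

theorem map_emb_comp_proj (hFmono : ∀ {X Y : K} {f g : X ⟶ Y}, f ≤ g → F.map f ≤ F.map g)
    (hκ : ∀ n, IsEmbProj (κ n) (κp n)) (hmono : Monotone fun n => κp n ≫ κ n)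
    (hcocone : ∀ n, plink F k n ≫ κ (n + 1) = κ n) (m n : ℕ) :
    F.map (κ m ≫ κp n) = κ (m + 1) ≫ κp (n + 1) := by
  rcases le_total m n with h | h
  · exact map_emb_comp_proj_of_le hκ hmono hcocone h
  · have hF := (isEmbProj_of_le hκ hmono h).map F hFmono
    rw [map_emb_comp_proj_of_le hκ hmono hcocone h] at hF
    exact hF.proj_unique (isEmbProj_of_le hκ hmono (Nat.succ_le_succ h))

end IteratedChain

section Unfold

-- `κ' n`, `κp' n` stand for `κ (n + 1)`, `κp (n + 1)`; keeping them separate avoids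
-- unfolding `pob F X (n + 1)` to `F.obj (pob F X n)`.
variable {K : Type u} [Category.{v} K] [OCat K] {F : K ⥤ K} {D : ℕ → K} {A : K}
  {κ : ∀ n, D n ⟶ A} {κp : ∀ n, A ⟶ D n} {κ' : ∀ n, F.obj (D n) ⟶ A}
  {κp' : ∀ n, A ⟶ F.obj (D n)}

theorem unfold_comp_map_proj (hκ₁ : ∀ n, κ n ≫ κp n = 𝟙 (D n))
    (hκ'₂ : ∀ n, κp' n ≫ κ' n ≤ 𝟙 A) (hF : ∀ m n, F.map (κ m ≫ κp n) = κ' m ≫ κp' n)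
    (hu : Monotone fun n => κp' n ≫ F.map (κ n)) (n : ℕ) :
    ωSup ⟨fun m => κp' m ≫ F.map (κ m), hu⟩ ≫ F.map (κp n) = κp' n := by
  rw [ωSup_comp]
  refine le_antisymm (ωSup_le _ _ fun m => ?_) (le_ωSup_of_le n (ge_of_eq ?_))
  · calc (κp' m ≫ F.map (κ m)) ≫ F.map (κp n) = (κp' m ≫ κ' m) ≫ κp' n := by
          rw [Category.assoc, ← F.map_comp, hF, Category.assoc]
      _ ≤ 𝟙 A ≫ κp' n := comp_mono (hκ'₂ m) le_rfl
      _ = κp' n := Category.id_comp _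
  · change (κp' n ≫ F.map (κ n)) ≫ F.map (κp n) = κp' n
    rw [Category.assoc, ← F.map_comp, hκ₁, F.map_id, Category.comp_id]

theorem ωSup_comp_ωSup_eq_comp_map_ωSup
    (hFmono : ∀ {X Y : K} {f g : X ⟶ Y}, f ≤ g → F.map f ≤ F.map g)
    (hFcont : ∀ {X Y : K} (c : Chain (X ⟶ Y)) (hm : Monotone fun n => F.map (c n)),
      F.map (ωSup c) = ωSup ⟨fun n => F.map (c n), hm⟩)
    {B : K} (b : B ⟶ F.obj B) (c : Chain (B ⟶ A)) (d : Chain (A ⟶ F.obj A))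
    (h : ∀ n, c (n + 1) ≫ d (n + 1) = b ≫ F.map (c n)) :
    ωSup c ≫ ωSup d = b ≫ F.map (ωSup c) := by
  rw [ωSup_comp_ωSup, hFcont c fun _ _ hmn => hFmono (c.monotone hmn), comp_ωSup]
  exact (ωSup_eq_of_eq_succ _ _ fun n => (h n).symm).symm

end Unfold

theorem terminal_coalgebra_general {K : Type u} [Category.{v} K] [OCat K]
    (bot : K) (ι : ∀ A : K, bot ⟶ A) (hinit : ∀ (A : K) (f : bot ⟶ A), f = ι A)
    (z : ∀ X Y : K, X ⟶ Y)
    (hz₁ : ∀ {X Y Z : K} (f : X ⟶ Y), f ≫ z Y Z = z X Z)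
    (F : K ⥤ K)
    (hFmono : ∀ {X Y : K} {f g : X ⟶ Y}, f ≤ g → F.map f ≤ F.map g)
    (hFcont : ∀ {X Y : K} (c : Chain (X ⟶ Y))
      (hm : Monotone fun n => F.map (c n)),
      F.map (ωSup c) = ωSup ⟨fun n => F.map (c n), hm⟩)
    (A : K) (κ : ∀ n, pob F bot n ⟶ A) (κp : ∀ n, A ⟶ pob F bot n)
    (hcocone : ∀ n, plink F (ι (F.obj bot)) n ≫ κ (n + 1) = κ n)
    (hκ₁ : ∀ n, κ n ≫ κp n = 𝟙 (pob F bot n)) (hκ₂ : ∀ n, κp n ≫ κ n ≤ 𝟙 A)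
    (hκmono : Monotone fun n => κp n ≫ κ n)
    (hκsup : ωSup ⟨fun n => κp n ≫ κ n, hκmono⟩ = 𝟙 A)
    (B : K) (b : B ⟶ F.obj B)
    (β : ∀ n, B ⟶ pob F bot n)
    (hβ₀ : β 0 = z B bot) (hβs : ∀ n, β (n + 1) = b ≫ F.map (β n)) :
    ∀ (hu : Monotone fun n => κp (n + 1) ≫ F.map (κ n))
      (hρ : Monotone fun n => β n ≫ κ n),
      (ωSup ⟨fun n => β n ≫ κ n, hρ⟩ ≫ ωSup ⟨fun n => κp (n + 1) ≫ F.map (κ n), hu⟩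
          = b ≫ F.map (ωSup ⟨fun n => β n ≫ κ n, hρ⟩)) ∧
      (∀ ψ : B ⟶ A,
        ψ ≫ ωSup ⟨fun n => κp (n + 1) ≫ F.map (κ n), hu⟩ = b ≫ F.map ψ →
        ψ = ωSup ⟨fun n => β n ≫ κ n, hρ⟩) := by
  intro hu hρ
  have hκ : ∀ n, IsEmbProj (κ n) (κp n) := fun n => ⟨hκ₁ n, hκ₂ n⟩
  have hunfold : ∀ n,
      ωSup ⟨fun m => κp (m + 1) ≫ F.map (κ m), hu⟩ ≫ F.map (κp n) = κp (n + 1) :=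
    unfold_comp_map_proj hκ₁ (fun n => hκ₂ (n + 1)) (map_emb_comp_proj hFmono hκ hκmono hcocone) hu
  have hzero : ∀ f : B ⟶ bot, f = z B bot := fun f => by
    rw [← Category.comp_id f, (hinit bot (𝟙 bot)).trans (hinit bot (z bot bot)).symm, hz₁]
  refine ⟨ωSup_comp_ωSup_eq_comp_map_ωSup hFmono hFcont b _ _
      (comp_emb_comp_proj_succ_comp_map_emb hcocone hκ₁ b hβs),
    fun ψ hψ => eq_ωSup_of_comp_proj_eq hκsup hρ ψ
      (comp_proj_eq_of_comp_unfold_eq hunfold b hβs hψ ((hzero _).trans hβ₀.symm))⟩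

/-- Under the hypotheses of the initial-algebra theorem, (A, unfold)
with unfold = ⊔ₙ F(κ_n) ∘ κ_{n+1}^p is a terminal F-coalgebra: for every F-coalgebra
(B, b), the morphism ρ = ⊔ₙ κ_n ∘ β_n (with β₀ = (⊥_B)^p = 0_{B⊥},
β_{n+1} = F β_n ∘ b) is the unique morphism with unfold ∘ ρ = F ρ ∘ b. -/
theorem terminal_coalgebra {K : Type u} [Category.{v} K] [OCat K]
    (bot : K) (ι : ∀ A : K, bot ⟶ A) (hinit : ∀ (A : K) (f : bot ⟶ A), f = ι A)
    (z : ∀ X Y : K, X ⟶ Y)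
    (hz₁ : ∀ {X Y Z : K} (f : X ⟶ Y), f ≫ z Y Z = z X Z)
    (hz₂ : ∀ {X Y Z : K} (g : Y ⟶ Z), z X Y ≫ g = z X Z)
    (hstrict : ∀ {X Y : K} (f : X ⟶ Y), z X Y ≤ f)
    (F : K ⥤ K)
    (hFmono : ∀ {X Y : K} {f g : X ⟶ Y}, f ≤ g → F.map f ≤ F.map g)
    (hFcont : ∀ {X Y : K} (c : Chain (X ⟶ Y))
      (hm : Monotone fun n => F.map (c n)),
      F.map (ωSup c) = ωSup ⟨fun n => F.map (c n), hm⟩)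
    (A : K) (κ : ∀ n, pob F bot n ⟶ A) (κp : ∀ n, A ⟶ pob F bot n)
    (hcocone : ∀ n, plink F (ι (F.obj bot)) n ≫ κ (n + 1) = κ n)
    (hκ₁ : ∀ n, κ n ≫ κp n = 𝟙 (pob F bot n)) (hκ₂ : ∀ n, κp n ≫ κ n ≤ 𝟙 A)
    (hκmono : Monotone fun n => κp n ≫ κ n)
    (hκsup : ωSup ⟨fun n => κp n ≫ κ n, hκmono⟩ = 𝟙 A)
    (B : K) (b : B ⟶ F.obj B)
    (β : ∀ n, B ⟶ pob F bot n)
    (hβ₀ : β 0 = z B bot) (hβs : ∀ n, β (n + 1) = b ≫ F.map (β n)) :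
    ∀ (hu : Monotone fun n => κp (n + 1) ≫ F.map (κ n))
      (hρ : Monotone fun n => β n ≫ κ n),
      (ωSup ⟨fun n => β n ≫ κ n, hρ⟩ ≫ ωSup ⟨fun n => κp (n + 1) ≫ F.map (κ n), hu⟩
          = b ≫ F.map (ωSup ⟨fun n => β n ≫ κ n, hρ⟩)) ∧
      (∀ ψ : B ⟶ A,
        ψ ≫ ωSup ⟨fun n => κp (n + 1) ≫ F.map (κ n), hu⟩ = b ≫ F.map ψ →
        ψ = ωSup ⟨fun n => β n ≫ κ n, hρ⟩) :=
  terminal_coalgebra_general bot ι hinit z hz₁ F hFmono hFcont A κ κp hcocone hκ₁ hκ₂ hκmono hκsup B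
    b β hβ₀ hβs
end

section
/- In the setting of the canonical fixed point (A, fold, unfold) of a locally continuous functor F on an O-category K with strict morphisms, initial object, and O-colimits: if (C, c) is an F-algebra in which c : F C → C is an embedding, then (C, c^p) is an F-coalgebra, and the unique algebra morphism φ : (A, fold) → (C, c) and the unique coalgebra morphism ρ : (C, c^p) → (A, unfold) form an embedding-projection pair: ρ ∘ φ = id_A and φ ∘ ρ ⊑ id_C. -/
open CategoryTheory OmegaCompletePartialOrder

universe v u

/-!
Writing `φ = ⊔ₙ κₙᵖ ∘ αₙ` and `ρ = ⊔ₙ βₙ ∘ κₙ`, each approximant pair `(αₙ, βₙ)` is an e-p-pair: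
`(α₀, β₀) = (⊥, ⊥ᵖ)` is one because `⊥` is initial and morphisms are strict, and the pair
`(αₙ₊₁, βₙ₊₁) = (c ∘ F αₙ, F βₙ ∘ cᵖ)` is the composite of the image of `(αₙ, βₙ)` under the
monotone functor `F` with `(c, cᵖ)`. Since composition is continuous, `ρ ∘ φ` is the supremum of
`βₙ ∘ κₙ ∘ κₙᵖ ∘ αₙ = βₙ ∘ αₙ`, hence equals `⊔ₙ κₙ ∘ κₙᵖ = id`, and `φ ∘ ρ = ⊔ₙ αₙ ∘ βₙ ⊑ id`.
-/

namespace OCat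

variable {K : Type u} [Category.{v} K] [OCat K]

theorem ωSup_comp_ωSup_s15 {X Y Z : K} (a : Chain (X ⟶ Y)) (b : Chain (Y ⟶ Z))
    (hm : Monotone fun n => a n ≫ b n) :
    ωSup a ≫ ωSup b = ωSup ⟨fun n => a n ≫ b n, hm⟩ := by
  have ha : Monotone fun n => a n ≫ ωSup b := fun _ _ h => comp_mono (a.monotone h) le_rfl
  rw [comp_cont_left (ωSup b) a ha]
  apply le_antisymm
  · refine ωSup_le _ _ fun n => ?_
    have hb : Monotone fun m => a n ≫ b m := fun _ _ h => comp_mono le_rfl (b.monotone h)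
    change a n ≫ ωSup b ≤ _
    rw [comp_cont_right (a n) b hb]
    refine ωSup_le _ _ fun m => ?_
    calc a n ≫ b m ≤ a (max n m) ≫ b (max n m) :=
          comp_mono (a.monotone (le_max_left n m)) (b.monotone (le_max_right n m))
      _ ≤ _ := le_ωSup ⟨fun k => a k ≫ b k, hm⟩ (max n m)
  · refine ωSup_le _ _ fun n => ?_
    calc a n ≫ b n ≤ a n ≫ ωSup b := comp_mono le_rfl (le_ωSup b n)
      _ ≤ _ := le_ωSup ⟨fun k => a k ≫ ωSup b, ha⟩ n

structure IsEPPair {X Y : K} (e : X ⟶ Y) (p : Y ⟶ X) : Prop where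
  comp_eq_id : e ≫ p = 𝟙 X
  comp_le_id : p ≫ e ≤ 𝟙 Y

theorem IsEPPair.comp {X Y Z : K} {e₁ : X ⟶ Y} {p₁ : Y ⟶ X} {e₂ : Y ⟶ Z} {p₂ : Z ⟶ Y}
    (h₁ : IsEPPair e₁ p₁) (h₂ : IsEPPair e₂ p₂) : IsEPPair (e₁ ≫ e₂) (p₂ ≫ p₁) where
  comp_eq_id := by
    rw [Category.assoc, ← Category.assoc e₂, h₂.comp_eq_id, Category.id_comp, h₁.comp_eq_id]
  comp_le_id :=
    calc (p₂ ≫ p₁) ≫ e₁ ≫ e₂ = p₂ ≫ (p₁ ≫ e₁) ≫ e₂ := by simp only [Category.assoc]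
      _ ≤ p₂ ≫ 𝟙 Y ≫ e₂ := comp_mono le_rfl (comp_mono h₁.comp_le_id le_rfl)
      _ = p₂ ≫ e₂ := by rw [Category.id_comp]
      _ ≤ 𝟙 Z := h₂.comp_le_id

theorem IsEPPair.map {X Y : K} {e : X ⟶ Y} {p : Y ⟶ X} (h : IsEPPair e p) (F : K ⥤ K)
    (hF : ∀ {X Y : K} {f g : X ⟶ Y}, f ≤ g → F.map f ≤ F.map g) :
    IsEPPair (F.map e) (F.map p) where
  comp_eq_id := by rw [← F.map_comp, h.comp_eq_id, F.map_id]
  comp_le_id := by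
    rw [← F.map_comp, ← F.map_id]
    exact hF h.comp_le_id

theorem isEPPair_ωSup {D : ℕ → K} {A C : K} (κ : ∀ n, D n ⟶ A) (κp : ∀ n, A ⟶ D n)
    (hκ : ∀ n, κ n ≫ κp n = 𝟙 (D n)) (hκmono : Monotone fun n => κp n ≫ κ n)
    (hκsup : ωSup ⟨fun n => κp n ≫ κ n, hκmono⟩ = 𝟙 A)
    (α : ∀ n, D n ⟶ C) (β : ∀ n, C ⟶ D n) (hαβ : ∀ n, IsEPPair (α n) (β n))
    (hφ : Monotone fun n => κp n ≫ α n) (hρ : Monotone fun n => β n ≫ κ n) :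
    IsEPPair (ωSup ⟨fun n => κp n ≫ α n, hφ⟩) (ωSup ⟨fun n => β n ≫ κ n, hρ⟩) where
  comp_eq_id := by
    rw [ωSup_comp_ωSup_s15 _ _ fun _ _ h => comp_mono (hφ h) (hρ h), ← hκsup]
    congr 1
    ext n
    change (κp n ≫ α n) ≫ β n ≫ κ n = κp n ≫ κ n
    rw [Category.assoc, ← Category.assoc (α n), (hαβ n).comp_eq_id, Category.id_comp]
  comp_le_id := by
    rw [ωSup_comp_ωSup_s15 _ _ fun _ _ h => comp_mono (hρ h) (hφ h)]
    refine ωSup_le _ _ fun n => ?_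
    change (β n ≫ κ n) ≫ κp n ≫ α n ≤ 𝟙 C
    rw [Category.assoc, ← Category.assoc (κ n), hκ, Category.id_comp]
    exact (hαβ n).comp_le_id

end OCat

theorem algebra_coalgebra_ep_pair_general {K : Type u} [Category.{v} K] [OCat K]
    (bot : K) (ι : ∀ A : K, bot ⟶ A) (hinit : ∀ (A : K) (f : bot ⟶ A), f = ι A)
    (z : ∀ X Y : K, X ⟶ Y)
    (hz₂ : ∀ {X Y Z : K} (g : Y ⟶ Z), z X Y ≫ g = z X Z)
    (hstrict : ∀ {X Y : K} (f : X ⟶ Y), z X Y ≤ f)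
    (F : K ⥤ K)
    (hFmono : ∀ {X Y : K} {f g : X ⟶ Y}, f ≤ g → F.map f ≤ F.map g)
    (A : K) (κ : ∀ n, pob F bot n ⟶ A) (κp : ∀ n, A ⟶ pob F bot n)
    (hκ₁ : ∀ n, κ n ≫ κp n = 𝟙 (pob F bot n))
    (hκmono : Monotone fun n => κp n ≫ κ n)
    (hκsup : ωSup ⟨fun n => κp n ≫ κ n, hκmono⟩ = 𝟙 A)
    (C : K) (c : F.obj C ⟶ C) (cp : C ⟶ F.obj C)
    (hc₁ : c ≫ cp = 𝟙 (F.obj C)) (hc₂ : cp ≫ c ≤ 𝟙 C)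
    (α : ∀ n, pob F bot n ⟶ C)
    (hα₀ : α 0 = ι C) (hαs : ∀ n, α (n + 1) = F.map (α n) ≫ c)
    (β : ∀ n, C ⟶ pob F bot n)
    (hβ₀ : β 0 = z C bot) (hβs : ∀ n, β (n + 1) = cp ≫ F.map (β n)) :
    ∀ (hφ : Monotone fun n => κp n ≫ α n) (hρ : Monotone fun n => β n ≫ κ n),
      (ωSup ⟨fun n => κp n ≫ α n, hφ⟩ ≫ ωSup ⟨fun n => β n ≫ κ n, hρ⟩ = 𝟙 A) ∧
      (ωSup ⟨fun n => β n ≫ κ n, hρ⟩ ≫ ωSup ⟨fun n => κp n ≫ α n, hφ⟩ ≤ 𝟙 C) := by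
  intro hφ hρ
  have hαβ : ∀ n, OCat.IsEPPair (α n) (β n) := by
    intro n
    induction n with
    | zero =>
      rw [hα₀, hβ₀]
      exact ⟨(hinit bot _).trans (hinit bot _).symm, (hz₂ _).trans_le (hstrict _)⟩
    | succ n ih =>
      rw [hαs, hβs]
      exact (ih.map F hFmono).comp ⟨hc₁, hc₂⟩
  have h := OCat.isEPPair_ωSup κ κp hκ₁ hκmono hκsup α β hαβ hφ hρ
  exact ⟨h.comp_eq_id, h.comp_le_id⟩

/-- For an F-algebra (C, c) with c an embedding (projection cp),
(C, cp) is an F-coalgebra, and the unique algebra morphism φ : A ⟶ C out of the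
canonical fixed point and the unique coalgebra morphism ρ : C ⟶ A into it form an
e-p-pair: ρ ∘ φ = id_A and φ ∘ ρ ⊑ id_C. -/
theorem algebra_coalgebra_ep_pair {K : Type u} [Category.{v} K] [OCat K]
    (bot : K) (ι : ∀ A : K, bot ⟶ A) (hinit : ∀ (A : K) (f : bot ⟶ A), f = ι A)
    (z : ∀ X Y : K, X ⟶ Y)
    (hz₁ : ∀ {X Y Z : K} (f : X ⟶ Y), f ≫ z Y Z = z X Z)
    (hz₂ : ∀ {X Y Z : K} (g : Y ⟶ Z), z X Y ≫ g = z X Z)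
    (hstrict : ∀ {X Y : K} (f : X ⟶ Y), z X Y ≤ f)
    (F : K ⥤ K)
    (hFmono : ∀ {X Y : K} {f g : X ⟶ Y}, f ≤ g → F.map f ≤ F.map g)
    (hFcont : ∀ {X Y : K} (c : Chain (X ⟶ Y))
      (hm : Monotone fun n => F.map (c n)),
      F.map (ωSup c) = ωSup ⟨fun n => F.map (c n), hm⟩)
    (A : K) (κ : ∀ n, pob F bot n ⟶ A) (κp : ∀ n, A ⟶ pob F bot n)
    (hcocone : ∀ n, plink F (ι (F.obj bot)) n ≫ κ (n + 1) = κ n)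
    (hκ₁ : ∀ n, κ n ≫ κp n = 𝟙 (pob F bot n)) (hκ₂ : ∀ n, κp n ≫ κ n ≤ 𝟙 A)
    (hκmono : Monotone fun n => κp n ≫ κ n)
    (hκsup : ωSup ⟨fun n => κp n ≫ κ n, hκmono⟩ = 𝟙 A)
    (C : K) (c : F.obj C ⟶ C) (cp : C ⟶ F.obj C)
    (hc₁ : c ≫ cp = 𝟙 (F.obj C)) (hc₂ : cp ≫ c ≤ 𝟙 C)
    (α : ∀ n, pob F bot n ⟶ C)
    (hα₀ : α 0 = ι C) (hαs : ∀ n, α (n + 1) = F.map (α n) ≫ c)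
    (β : ∀ n, C ⟶ pob F bot n)
    (hβ₀ : β 0 = z C bot) (hβs : ∀ n, β (n + 1) = cp ≫ F.map (β n)) :
    ∀ (hφ : Monotone fun n => κp n ≫ α n) (hρ : Monotone fun n => β n ≫ κ n),
      (ωSup ⟨fun n => κp n ≫ α n, hφ⟩ ≫ ωSup ⟨fun n => β n ≫ κ n, hρ⟩ = 𝟙 A) ∧
      (ωSup ⟨fun n => β n ≫ κ n, hρ⟩ ≫ ωSup ⟨fun n => κp n ≫ α n, hφ⟩ ≤ 𝟙 C) :=
  algebra_coalgebra_ep_pair_general bot ι hinit z hz₂ hstrict F hFmono A κ κp hκ₁ hκmono hκsup C c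
    cp hc₁ hc₂ α hα₀ hαs β hβ₀ hβs
end
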